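/- arXiv:1808.10651 — 3 statements merged into one kernel-verified Lean document; each statement's English description precedes it below -/
import Mathlib

section
/- Let Q be a J×J row-stochastic matrix, a ∈ ℝ^J with aᵀQ^ρ = 0 for some ρ ≥ 1, m ∈ ℝ^J, and c ∈ ℝ. Then the equation c = β · aᵀ(I - βQ)^{-1}m, viewed as an equation in β ∈ ℝ, has at most ρ solutions, provided c ≠ 0 or aᵀm ≠ 0. -/
open Matrix Polynomial

/-!
For `|β| < 1` the matrix `1 - βQ` is strictly diagonally dominant, hence invertible, and
multiplying `(∑_{r<ρ} (βQ)^r)(1 - βQ) = 1 - (βQ)^ρ` on the left by `aᵀ` kills the last term.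
So `β aᵀ(1 - βQ)⁻¹ m = ∑_{r<ρ} (aᵀQ^r m) β^(r+1)`: a polynomial of degree at most `ρ` with
constant coefficient `0` and linear coefficient `aᵀm`. Subtracting `c` leaves a nonzero
polynomial, which has at most `ρ` roots.
-/

namespace Polynomial

variable {R : Type*} [CommRing R] [IsDomain R]

theorem finite_and_ncard_le_natDegree_of_forall_isRoot {p : R[X]} (hp : p ≠ 0) {S : Set R}
    (hS : ∀ x ∈ S, p.IsRoot x) : S.Finite ∧ S.ncard ≤ p.natDegree := by
  classical
  have hsub : S ⊆ p.roots.toFinset := fun x hx ↦ by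
    simpa [Multiset.mem_toFinset, mem_roots hp] using hS x hx
  refine ⟨p.roots.toFinset.finite_toSet.subset hsub, ?_⟩
  calc S.ncard ≤ (p.roots.toFinset : Set R).ncard := Set.ncard_le_ncard hsub
    _ = p.roots.toFinset.card := Set.ncard_coe_finset _
    _ ≤ p.natDegree := (Multiset.toFinset_card_le _).trans (card_roots' p)

end Polynomial

namespace Matrix

variable {n : Type*} [Fintype n] [DecidableEq n]

theorem det_one_sub_smul_ne_zero {Q : Matrix n n ℝ} (hQ0 : ∀ i j, 0 ≤ Q i j)
    (hQ1 : ∀ i, ∑ j, Q i j ≤ 1) {β : ℝ} (hβ : |β| < 1) : (1 - β • Q).det ≠ 0 := by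
  refine det_ne_zero_of_sum_row_lt_diag fun k ↦ ?_
  have hoff : ∀ j ∈ Finset.univ.erase k, ‖(1 - β • Q) k j‖ = |β| * Q k j := fun j hj ↦ by
    rw [sub_apply, one_apply_ne (Finset.ne_of_mem_erase hj).symm, smul_apply, smul_eq_mul,
      zero_sub, norm_neg, Real.norm_eq_abs, abs_mul, abs_of_nonneg (hQ0 k j)]
  have hdiag : 1 - |β| * Q k k ≤ ‖(1 - β • Q) k k‖ := by
    rw [sub_apply, one_apply_eq, smul_apply, smul_eq_mul, Real.norm_eq_abs]
    have := abs_sub_abs_le_abs_sub 1 (β * Q k k)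
    rwa [abs_one, abs_mul, abs_of_nonneg (hQ0 k k)] at this
  have hQkk : Q k k ≤ 1 :=
    (Finset.single_le_sum (fun j _ ↦ hQ0 k j) (Finset.mem_univ k)).trans (hQ1 k)
  calc ∑ j ∈ Finset.univ.erase k, ‖(1 - β • Q) k j‖
      = |β| * (∑ j, Q k j - Q k k) := by
        rw [Finset.sum_congr rfl hoff, ← Finset.mul_sum,
          Finset.sum_erase_eq_sub (Finset.mem_univ k)]
    _ < 1 - |β| * Q k k := by nlinarith [abs_nonneg β, hQ1 k]
    _ ≤ ‖(1 - β • Q) k k‖ := hdiag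

variable {K : Type*} [Field K]

theorem vecMul_inv_one_sub_smul_eq_geom_sum {Q : Matrix n n K} {a : n → K} {ρ : ℕ}
    (hfd : a ᵥ* Q ^ ρ = 0) {β : K} (hdet : IsUnit (1 - β • Q).det) :
    a ᵥ* (1 - β • Q)⁻¹ = a ᵥ* ∑ r ∈ Finset.range ρ, (β • Q) ^ r := by
  have hgeom : a ᵥ* ((∑ r ∈ Finset.range ρ, (β • Q) ^ r) * (1 - β • Q)) = a := by
    rw [geom_sum_mul_neg, vecMul_sub, vecMul_one, _root_.smul_pow, vecMul_smul, hfd, smul_zero,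
      sub_zero]
  calc a ᵥ* (1 - β • Q)⁻¹
      = a ᵥ* ((∑ r ∈ Finset.range ρ, (β • Q) ^ r) * (1 - β • Q) * (1 - β • Q)⁻¹) := by
        rw [← vecMul_vecMul, hgeom]
    _ = a ᵥ* ∑ r ∈ Finset.range ρ, (β • Q) ^ r := by
        rw [mul_assoc, mul_nonsing_inv _ hdet, mul_one]

end Matrix

section

variable {n K : Type*} [Fintype n] [DecidableEq n] [Field K]

noncomputable def truncatedResolventPoly (Q : Matrix n n K) (a m : n → K) (ρ : ℕ) : K[X] :=
  ∑ r ∈ Finset.range ρ, C ((a ᵥ* Q ^ r) ⬝ᵥ m) * X ^ (r + 1)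

variable {Q : Matrix n n K} {a m : n → K} {ρ : ℕ}

theorem eval_truncatedResolventPoly (hfd : a ᵥ* Q ^ ρ = 0) {β : K}
    (hdet : IsUnit (1 - β • Q).det) :
    (truncatedResolventPoly Q a m ρ).eval β = β * (a ⬝ᵥ ((1 - β • Q)⁻¹ *ᵥ m)) := by
  rw [dotProduct_mulVec, vecMul_inv_one_sub_smul_eq_geom_sum hfd hdet, truncatedResolventPoly,
    eval_finsetSum, vecMul_sum, sum_dotProduct, Finset.mul_sum]
  refine Finset.sum_congr rfl fun r _ ↦ ?_
  rw [_root_.smul_pow, vecMul_smul, smul_dotProduct, smul_eq_mul, eval_mul, eval_C, eval_X_pow]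
  ring

theorem natDegree_truncatedResolventPoly_le :
    (truncatedResolventPoly Q a m ρ).natDegree ≤ ρ :=
  natDegree_sum_le_of_forall_le _ _ fun _ hr ↦
    (natDegree_C_mul_X_pow_le _ _).trans (Finset.mem_range.mp hr)

theorem coeff_truncatedResolventPoly_zero : (truncatedResolventPoly Q a m ρ).coeff 0 = 0 := by
  simp [truncatedResolventPoly, coeff_X_pow]

theorem coeff_truncatedResolventPoly_one (hρ : ρ ≠ 0) :
    (truncatedResolventPoly Q a m ρ).coeff 1 = a ⬝ᵥ m := by
  simp [truncatedResolventPoly, coeff_X_pow, hρ]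

theorem truncatedResolventPoly_sub_C_ne_zero (hfd : a ᵥ* Q ^ ρ = 0) {c : K}
    (hnz : c ≠ 0 ∨ a ⬝ᵥ m ≠ 0) : truncatedResolventPoly Q a m ρ - C c ≠ 0 := by
  intro h
  rcases hnz with hc | ham
  · apply hc
    simpa [coeff_truncatedResolventPoly_zero] using congrArg (coeff · 0) h
  · have hρ : ρ ≠ 0 := by
      rintro rfl
      rw [pow_zero, vecMul_one] at hfd
      exact ham (by rw [hfd, zero_dotProduct])
    apply ham
    simpa [coeff_truncatedResolventPoly_one hρ] using congrArg (coeff · 1) h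

end

theorem stmt_8_general {J : ℕ} (Q : Matrix (Fin J) (Fin J) ℝ)
    (hQ0 : ∀ i j, 0 ≤ Q i j) (hQ1 : ∀ i, ∑ j, Q i j = 1)
    (a m : Fin J → ℝ) (ρ : ℕ)
    (hfd : a ᵥ* Q ^ ρ = 0) (c : ℝ)
    (hnz : c ≠ 0 ∨ a ⬝ᵥ m ≠ 0) :
    ({β : ℝ | |β| < 1 ∧ c = β * (a ⬝ᵥ ((1 - β • Q)⁻¹ *ᵥ m))}).Finite ∧
      ({β : ℝ | |β| < 1 ∧ c = β * (a ⬝ᵥ ((1 - β • Q)⁻¹ *ᵥ m))}).ncard ≤ ρ := by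
  have hroot : ∀ β ∈ {β : ℝ | |β| < 1 ∧ c = β * (a ⬝ᵥ ((1 - β • Q)⁻¹ *ᵥ m))},
      (truncatedResolventPoly Q a m ρ - C c).IsRoot β := by
    rintro β ⟨hβ, hc⟩
    have hdet := det_one_sub_smul_ne_zero hQ0 (fun i ↦ (hQ1 i).le) hβ
    rw [IsRoot, eval_sub, eval_C, eval_truncatedResolventPoly hfd hdet.isUnit, ← hc, sub_self]
  obtain ⟨hfin, hcard⟩ := finite_and_ncard_le_natDegree_of_forall_isRoot
    (truncatedResolventPoly_sub_C_ne_zero hfd hnz) hroot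
  exact ⟨hfin, hcard.trans (natDegree_sub_C.trans_le natDegree_truncatedResolventPoly_le)⟩

theorem stmt_8 {J : ℕ} (Q : Matrix (Fin J) (Fin J) ℝ)
    (hQ0 : ∀ i j, 0 ≤ Q i j) (hQ1 : ∀ i, ∑ j, Q i j = 1)
    (a m : Fin J → ℝ) (ρ : ℕ) (hρ : 1 ≤ ρ)
    (hfd : a ᵥ* Q ^ ρ = 0) (c : ℝ)
    (hnz : c ≠ 0 ∨ a ⬝ᵥ m ≠ 0) :
    ({β : ℝ | |β| < 1 ∧ c = β * (a ⬝ᵥ ((1 - β • Q)⁻¹ *ᵥ m))}).Finite ∧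
      ({β : ℝ | |β| < 1 ∧ c = β * (a ⬝ᵥ ((1 - β • Q)⁻¹ *ᵥ m))}).ncard ≤ ρ :=
  stmt_8_general Q hQ0 hQ1 a m ρ hfd c hnz
end

section
/- Under the monotonicity hypothesis aᵀQ^r m ≥ 0 for all r ≥ 0 with strict inequality for some r, the equation c = β · aᵀ(I - βQ)^{-1} m has at most one solution β ∈ [0,1). -/
/-!
For `0 ≤ β < 1` the Neumann series gives `β aᵀ (1 - β Q)⁻¹ m = ∑ᵣ β ^ (r + 1) aᵀ Q ^ r m`;
it converges because a row-stochastic `Q` has `‖Q‖ ≤ 1` in the max-row-sum norm. Every term is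
nondecreasing in `β` and some term is strictly increasing, so the left side is strictly increasing
on `[0, 1)`, hence injective.
-/

open Matrix

namespace Matrix

variable {n : Type*} [Fintype n] [DecidableEq n] {M : Matrix n n ℝ}

section linftyOpNorm

attribute [local instance] Matrix.linftyOpNormedRing Matrix.linftyOpNormedAlgebra

lemma linfty_opNorm_le_one_of_mem_rowStochastic (hM : M ∈ rowStochastic ℝ n) : ‖M‖ ≤ 1 := by
  rw [linfty_opNorm_def, ← NNReal.coe_one, NNReal.coe_le_coe]
  refine Finset.sup_le fun i _ => ?_
  rw [← NNReal.coe_le_coe, NNReal.coe_sum, NNReal.coe_one, ← sum_row_of_mem_rowStochastic hM i]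
  exact (Finset.sum_congr rfl fun j _ => abs_of_nonneg (hM.1 i j)).le

lemma hasSum_smul_pow_of_mem_rowStochastic (hM : M ∈ rowStochastic ℝ n) {β : ℝ} (hβ : |β| < 1) :
    HasSum (fun r : ℕ => β ^ r • M ^ r) (1 - β • M)⁻¹ := by
  have : CompleteSpace (Matrix n n ℝ) := FiniteDimensional.complete ℝ _
  have hnorm : ‖β • M‖ < 1 :=
    calc ‖β • M‖ ≤ |β| * ‖M‖ := norm_smul_le _ _
      _ ≤ |β| * 1 := by gcongr; exact linfty_opNorm_le_one_of_mem_rowStochastic hM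
      _ < 1 := by rwa [mul_one]
  simp_rw [← smul_pow, nonsing_inv_eq_ringInverse]
  exact hasSum_geom_series_inverse _ hnorm

end linftyOpNorm

lemma hasSum_pow_succ_mul_dotProduct_pow_mulVec (hM : M ∈ rowStochastic ℝ n) (a v : n → ℝ)
    {β : ℝ} (hβ : |β| < 1) :
    HasSum (fun r : ℕ => β ^ (r + 1) * (a ⬝ᵥ (M ^ r *ᵥ v)))
      (β * (a ⬝ᵥ ((1 - β • M)⁻¹ *ᵥ v))) := by
  have hcont : Continuous fun A : Matrix n n ℝ => a ⬝ᵥ (A *ᵥ v) := by fun_prop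
  have h : HasSum (fun r : ℕ => a ⬝ᵥ ((β ^ r • M ^ r) *ᵥ v)) (a ⬝ᵥ ((1 - β • M)⁻¹ *ᵥ v)) :=
    (hasSum_smul_pow_of_mem_rowStochastic hM hβ).map
      ((dotProductBilin ℝ ℝ a).toAddMonoidHom.comp (mulVec.addMonoidHomLeft v)) hcont
  simp_rw [smul_mulVec, dotProduct_smul, smul_eq_mul] at h
  simpa only [pow_succ', mul_assoc] using h.mul_left β

lemma strictMonoOn_mul_dotProduct_inv_mulVec (hM : M ∈ rowStochastic ℝ n) (a v : n → ℝ)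
    (hnn : ∀ r : ℕ, 0 ≤ a ⬝ᵥ (M ^ r *ᵥ v)) (hpos : ∃ r : ℕ, 0 < a ⬝ᵥ (M ^ r *ᵥ v)) :
    StrictMonoOn (fun β : ℝ => β * (a ⬝ᵥ ((1 - β • M)⁻¹ *ᵥ v))) (Set.Ico 0 1) := by
  intro β hβ γ hγ hβγ
  obtain ⟨r₀, hr₀⟩ := hpos
  have hsum {β : ℝ} (hβ : β ∈ Set.Ico (0 : ℝ) 1) := hasSum_pow_succ_mul_dotProduct_pow_mulVec hM a v
    (abs_lt.2 ⟨by linarith [hβ.1], hβ.2⟩)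
  refine hasSum_lt (i := r₀) (fun r => ?_) ?_ (hsum hβ) (hsum hγ)
  · exact mul_le_mul_of_nonneg_right (pow_le_pow_left₀ hβ.1 hβγ.le _) (hnn r)
  · exact mul_lt_mul_of_pos_right (pow_lt_pow_left₀ hβγ hβ.1 r₀.succ_ne_zero) hr₀

end Matrix

theorem stmt_12 {J : ℕ} (Q : Matrix (Fin J) (Fin J) ℝ)
    (hQ0 : ∀ i j, 0 ≤ Q i j) (hQ1 : ∀ i, ∑ j, Q i j = 1)
    (a m : Fin J → ℝ) (c : ℝ)
    (hnn : ∀ r : ℕ, 0 ≤ a ⬝ᵥ (Q ^ r *ᵥ m))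
    (hpos : ∃ r : ℕ, 0 < a ⬝ᵥ (Q ^ r *ᵥ m)) :
    ∀ β₁ ∈ Set.Ico (0 : ℝ) 1, ∀ β₂ ∈ Set.Ico (0 : ℝ) 1,
      c = β₁ * (a ⬝ᵥ ((1 - β₁ • Q)⁻¹ *ᵥ m)) →
      c = β₂ * (a ⬝ᵥ ((1 - β₂ • Q)⁻¹ *ᵥ m)) → β₁ = β₂ := by
  intro β₁ hβ₁ β₂ hβ₂ h₁ h₂
  have hQ : Q ∈ rowStochastic ℝ (Fin J) := mem_rowStochastic_iff_sum.2 ⟨hQ0, hQ1⟩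
  exact (strictMonoOn_mul_dotProduct_inv_mulVec hQ a m hnn hpos).injOn hβ₁ hβ₂ (h₁.symm.trans h₂)
end

section
/- If single-action one-period dependence holds, i.e., a₁ᵀQ_K = 0 and a₂ᵀQ_K = 0 where a₁ᵀ = Q_k(x̃₁) - Q_K(x̃₁) and a₂ᵀ = Q_l(x̃₂) - Q_K(x̃₂), and the rank condition (a₁ - a₂)ᵀm ≠ 0 holds, then the equation c = β(a₁ - a₂)ᵀ(I - βQ_K)^{-1}m has exactly one solution β = c / ((a₁ - a₂)ᵀm) in ℝ, and this solution lies in [0,1) if and only if 0 ≤ c/((a₁-a₂)ᵀm) < 1. -/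
open Matrix

theorem stmt_19 {J : ℕ} (QK : Matrix (Fin J) (Fin J) ℝ)
    (hQ0 : ∀ i j, 0 ≤ QK i j) (hQ1 : ∀ i, ∑ j, QK i j = 1)
    (a₁ a₂ m : Fin J → ℝ) (c : ℝ)
    (hfd1 : a₁ ᵥ* QK = 0) (hfd2 : a₂ ᵥ* QK = 0)
    (hrank : (a₁ - a₂) ⬝ᵥ m ≠ 0) :
    (∀ β : ℝ, |β| < 1 →
        (a₁ - a₂) ⬝ᵥ ((1 - β • QK)⁻¹ *ᵥ m) = (a₁ - a₂) ⬝ᵥ m) ∧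
      {β : ℝ | c = β * ((a₁ - a₂) ⬝ᵥ m)} = {c / ((a₁ - a₂) ⬝ᵥ m)} ∧
      (c / ((a₁ - a₂) ⬝ᵥ m) ∈ Set.Ico (0 : ℝ) 1 ↔
        0 ≤ c / ((a₁ - a₂) ⬝ᵥ m) ∧ c / ((a₁ - a₂) ⬝ᵥ m) < 1) := by
  refine ⟨?_, ?_, Set.mem_Ico⟩
  · intro β hβ
    set A : Matrix (Fin J) (Fin J) ℝ := 1 - β • QK with hA
    have hdiag : ∀ k, QK k k ≤ 1 := by
      intro k
      calc QK k k ≤ ∑ j, QK k j :=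
            Finset.single_le_sum (fun j _ => hQ0 k j) (Finset.mem_univ k)
        _ = 1 := hQ1 k
    have hdet : A.det ≠ 0 := by
      apply det_ne_zero_of_sum_row_lt_diag
      intro k
      have hsum : ∑ j ∈ Finset.univ.erase k, QK k j = 1 - QK k k := by
        have := hQ1 k
        rw [← Finset.add_sum_erase _ _ (Finset.mem_univ k)] at this
        linarith
      have h1 : ∑ j ∈ Finset.univ.erase k, ‖A k j‖
          = |β| * (1 - QK k k) := by
        rw [← hsum, Finset.mul_sum]
        apply Finset.sum_congr rfl
        intro j hj
        have hjk : j ≠ k := Finset.ne_of_mem_erase hj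
        simp [hA, Matrix.one_apply_ne hjk.symm, abs_mul, abs_of_nonneg (hQ0 k j)]
      have h2 : 1 - |β| * QK k k ≤ ‖A k k‖ := by
        have : A k k = 1 - β * QK k k := by simp [hA]
        rw [this]
        have := abs_mul β (QK k k)
        have habs : |β * QK k k| = |β| * QK k k := by
          rw [abs_mul, abs_of_nonneg (hQ0 k k)]
        calc 1 - |β| * QK k k = 1 - |β * QK k k| := by rw [habs]
          _ ≤ |1 - β * QK k k| := by
              have := abs_sub_abs_le_abs_sub (1 : ℝ) (β * QK k k)
              simpa using this
          _ = ‖(1 : ℝ) - β * QK k k‖ := rfl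
      rw [h1]
      have : |β| * (1 - QK k k) < 1 - |β| * QK k k := by nlinarith [hdiag k, hQ0 k k, abs_nonneg β]
      linarith
    have hinv : IsUnit A.det := isUnit_iff_ne_zero.mpr hdet
    have h0 : (a₁ - a₂) ᵥ* QK = 0 := by rw [Matrix.sub_vecMul, hfd1, hfd2, sub_zero]
    have hsm : (a₁ - a₂) ᵥ* (β • QK) = β • ((a₁ - a₂) ᵥ* QK) := by
      funext i
      simp only [Matrix.vecMul, dotProduct, Matrix.smul_apply, Pi.smul_apply,
        smul_eq_mul, Finset.mul_sum]
      exact Finset.sum_congr rfl fun j _ => by ring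
    have hv : (a₁ - a₂) ᵥ* A = (a₁ - a₂) := by
      rw [hA, Matrix.vecMul_sub, Matrix.vecMul_one, hsm, h0]
      simp
    have key : (a₁ - a₂) ᵥ* A⁻¹ = a₁ - a₂ := by
      calc (a₁ - a₂) ᵥ* A⁻¹ = ((a₁ - a₂) ᵥ* A) ᵥ* A⁻¹ := by rw [hv]
        _ = (a₁ - a₂) ᵥ* (A * A⁻¹) := by rw [Matrix.vecMul_vecMul]
        _ = a₁ - a₂ := by rw [Matrix.mul_nonsing_inv A hinv]; simp
    rw [Matrix.dotProduct_mulVec, key]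
  · have hd := hrank
    ext β
    simp only [Set.mem_setOf_eq, Set.mem_singleton_iff]
    rw [eq_div_iff hd]
    constructor <;> intro h <;> linarith
end
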